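/- If (λ, y) is a solution of the four-variable system (S), then λ ≤ 1/4. -/
import Mathlib


open Finset

/-- The four-variable system (S), with variables `y1 = y_1`, `yn = y_n`,
`yn1 = y_{n+1}`, `ynm = y_{n+m}`. -/
def Ssol (n m : ℕ) (a : ℕ → ℝ) (lam y1 yn yn1 ynm : ℝ) : Prop :=
  yn = min ((1 - (a n + a (n + m))) - 2 * lam + y1 + yn1 - ynm)
      ((∑ i ∈ Finset.Icc 1 (n - 1), a i) - ((n : ℝ) - 1) * lam + y1) ∧
  ynm = min ((1 - (a n + a (n + m))) - lam + y1 + yn1 - yn)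
      ((∑ i ∈ Finset.Icc (n + 1) (n + m - 1), a i) - ((m : ℝ) - 1) * lam + yn1) ∧
  y1 = min (a n - lam + (yn + ynm) / 2)
      ((∑ i ∈ Finset.Icc 1 (n - 1), (1 - a i)) - ((n : ℝ) - 1) * lam + yn) ∧
  yn1 = min (a (n + m) - lam + (yn + ynm) / 2)
      ((∑ i ∈ Finset.Icc (n + 1) (n + m - 1), (1 - a i)) - ((m : ℝ) - 1) * lam + ynm)

theorem stmt1 (n m : ℕ) (hn : 2 ≤ n) (hm : 2 ≤ m) (a : ℕ → ℝ)
    (ha : ∀ i : ℕ, 1 ≤ i → i ≤ n + m → 0 ≤ a i ∧ a i ≤ 1)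
    (hprio : a n + a (n + m) ≤ 1)
    (lam y1 yn yn1 ynm : ℝ) (hS : Ssol n m a lam y1 yn yn1 ynm) :
    lam ≤ 1 / 4 := by
  obtain ⟨h1, h2, h3, h4⟩ := hS
  have e1 : yn ≤ (1 - (a n + a (n + m))) - 2 * lam + y1 + yn1 - ynm :=
    h1 ▸ min_le_left _ _
  have e3 : y1 ≤ a n - lam + (yn + ynm) / 2 := h3 ▸ min_le_left _ _
  have e4 : yn1 ≤ a (n + m) - lam + (yn + ynm) / 2 := h4 ▸ min_le_left _ _
  linarith
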